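/- arXiv:1310.1314 — 2 statements merged into one kernel-verified Lean document; each statement's English description precedes it below -/
import Mathlib

section
/- Let P > 0 and consider the sum-rate bound R(P) = C(h_d²/h_c² + (h_d/h_c − 1)²) + C(1 + P(h_d² + h_c²)) + C(P h_r²), where C(x) = (1/2)log(1+x). If h_d = 1, h_c² = P^{α−1}, h_r² = P^{β−1} with α > 1 and β > 0 fixed, then lim_{P→∞} R(P)/((1/2)log P) = α + β. -/
open Filter

private lemma log_quot_aux (c : ℝ) (f : ℝ → ℝ) (hf : Tendsto f atTop (nhds 1)) :
    Tendsto (fun P : ℝ => Real.log (P ^ c * f P) / Real.log P) atTop (nhds c) := by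
  have hfpos : ∀ᶠ P in atTop, 0 < f P :=
    hf.eventually (eventually_gt_nhds (by norm_num : (0:ℝ) < 1))
  have hlogf : Tendsto (fun P : ℝ => Real.log (f P)) atTop (nhds 0) := by
    have := (Real.continuousAt_log one_ne_zero).tendsto.comp hf
    rw [Real.log_one] at this; exact this
  have h1 : Tendsto (fun P : ℝ => c + Real.log (f P) / Real.log P) atTop (nhds c) := by
    simpa using tendsto_const_nhds.add (hlogf.div_atTop Real.tendsto_log_atTop)
  refine Tendsto.congr' ?_ h1
  filter_upwards [eventually_gt_atTop 1, hfpos] with P hP hfP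
  have hP0 : (0:ℝ) < P := lt_trans one_pos hP
  have hlog : Real.log P ≠ 0 := ne_of_gt (Real.log_pos hP)
  rw [Real.log_mul (by positivity) (ne_of_gt hfP), Real.log_rpow hP0]
  field_simp

/-- With `h_d = 1`, `h_c = P^{(α−1)/2}`, `h_r² = P^{β−1}` for `α > 1`, `β > 0`,
the normalized sum-rate upper bound tends to `α + β` as `P → ∞`. -/
theorem sum_rate_bound_gdof (α β : ℝ) (hα : 1 < α) (hβ : 0 < β) :
    Tendsto
      (fun P : ℝ =>
        ((1 / 2) * Real.log (1 + (1 / (P ^ ((α - 1) / 2)) ^ 2 +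
            (1 / P ^ ((α - 1) / 2) - 1) ^ 2)) +
          (1 / 2) * Real.log (1 + (1 + P * (1 + (P ^ ((α - 1) / 2)) ^ 2))) +
          (1 / 2) * Real.log (1 + P * P ^ (β - 1))) /
        ((1 / 2) * Real.log P))
      atTop (nhds (α + β)) := by
  -- first term: tends to 0
  have hrp : Tendsto (fun P : ℝ => P ^ ((α - 1) / 2)) atTop atTop :=
    tendsto_rpow_atTop (by linarith)
  have hinv : Tendsto (fun P : ℝ => 1 / P ^ ((α - 1) / 2)) atTop (nhds 0) := by
    simp only [one_div]; exact hrp.inv_tendsto_atTop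
  have hq1 : Tendsto (fun P : ℝ =>
      Real.log (1 + (1 / (P ^ ((α - 1) / 2)) ^ 2 + (1 / P ^ ((α - 1) / 2) - 1) ^ 2)) /
        Real.log P) atTop (nhds 0) := by
    have hnum : Tendsto (fun P : ℝ =>
        Real.log (1 + (1 / (P ^ ((α - 1) / 2)) ^ 2 + (1 / P ^ ((α - 1) / 2) - 1) ^ 2)))
        atTop (nhds (Real.log 2)) := by
      have hin : Tendsto (fun P : ℝ =>
          1 + (1 / (P ^ ((α - 1) / 2)) ^ 2 + (1 / P ^ ((α - 1) / 2) - 1) ^ 2))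
          atTop (nhds 2) := by
        have h2 : Tendsto (fun P : ℝ => (1 / P ^ ((α - 1) / 2)) ^ 2) atTop (nhds 0) := by
          simpa using hinv.pow 2
        have h3 : Tendsto (fun P : ℝ => (1 / P ^ ((α - 1) / 2) - 1) ^ 2) atTop (nhds 1) := by
          have := (hinv.sub_const 1).pow 2
          simpa using this
        have := (tendsto_const_nhds (x := (1:ℝ))).add
          ((by simpa [one_div, div_pow] using h2.add h3 :
            Tendsto (fun P : ℝ => 1 / (P ^ ((α - 1) / 2)) ^ 2 +
              (1 / P ^ ((α - 1) / 2) - 1) ^ 2) atTop (nhds 1)))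
        norm_num at this
        convert this using 2
        norm_num
      exact ((Real.continuousAt_log (by norm_num)).tendsto.comp hin)
    exact hnum.div_atTop Real.tendsto_log_atTop
  -- second term: tends to α
  have hneg : Tendsto (fun P : ℝ => P ^ (-α)) atTop (nhds 0) :=
    tendsto_rpow_neg_atTop (by linarith)
  have hneg1 : Tendsto (fun P : ℝ => P ^ (1 - α)) atTop (nhds 0) := by
    have := tendsto_rpow_neg_atTop (y := α - 1) (by linarith)
    convert this using 2 with P
    congr 1; ring
  have hf2 : Tendsto (fun P : ℝ => 2 * P ^ (-α) + P ^ (1 - α) + 1) atTop (nhds 1) := by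
    have := ((hneg.const_mul 2).add hneg1).add (tendsto_const_nhds (x := (1:ℝ)))
    simpa using this
  have hq2 : Tendsto (fun P : ℝ =>
      Real.log (1 + (1 + P * (1 + (P ^ ((α - 1) / 2)) ^ 2))) / Real.log P)
      atTop (nhds α) := by
    refine Tendsto.congr' ?_ (log_quot_aux α _ hf2)
    filter_upwards [eventually_gt_atTop 0] with P hP0
    have hsq : (P ^ ((α - 1) / 2)) ^ 2 = P ^ (α - 1) := by
      rw [sq, ← Real.rpow_add hP0]; congr 1; ring
    have e1 : P ^ α * P ^ (-α) = 1 := by rw [← Real.rpow_add hP0]; simp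
    have e2 : P ^ α * P ^ (1 - α) = P := by rw [← Real.rpow_add hP0]; simp
    have e3 : P ^ (α - 1) * P = P ^ α := by
      rw [← Real.rpow_add_one hP0.ne' (α - 1)]; congr 1; ring
    have key : P ^ α * (2 * P ^ (-α) + P ^ (1 - α) + 1)
        = 1 + (1 + P * (1 + (P ^ ((α - 1) / 2)) ^ 2)) := by
      rw [hsq]
      have expand : P ^ α * (2 * P ^ (-α) + P ^ (1 - α) + 1)
          = 2 * (P ^ α * P ^ (-α)) + P ^ α * P ^ (1 - α) + P ^ α := by ring
      rw [expand, e1, e2, ← e3]; ring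
    rw [key]
  -- third term: tends to β
  have hf3 : Tendsto (fun P : ℝ => P ^ (-β) + 1) atTop (nhds 1) := by
    have := (tendsto_rpow_neg_atTop hβ).add (tendsto_const_nhds (x := (1:ℝ)))
    simpa using this
  have hq3 : Tendsto (fun P : ℝ =>
      Real.log (1 + P * P ^ (β - 1)) / Real.log P) atTop (nhds β) := by
    refine Tendsto.congr' ?_ (log_quot_aux β _ hf3)
    filter_upwards [eventually_gt_atTop 0] with P hP0
    have e1 : P ^ β * P ^ (-β) = 1 := by rw [← Real.rpow_add hP0]; simp
    have e2 : P ^ (β - 1) * P = P ^ β := by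
      rw [← Real.rpow_add_one hP0.ne' (β - 1)]; congr 1; ring
    have key : P ^ β * (P ^ (-β) + 1) = 1 + P * P ^ (β - 1) := by
      have expand : P ^ β * (P ^ (-β) + 1) = P ^ β * P ^ (-β) + P ^ β := by ring
      rw [expand, e1, ← e2]; ring
    rw [key]
  -- assemble
  have hsum := (hq1.add hq2).add hq3
  rw [zero_add] at hsum
  refine Tendsto.congr (fun P => ?_) hsum
  have hhalf : (1 / 2 : ℝ) ≠ 0 := by norm_num
  rw [show (1 / 2 : ℝ) * Real.log (1 + (1 / (P ^ ((α - 1) / 2)) ^ 2 +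
        (1 / P ^ ((α - 1) / 2) - 1) ^ 2)) +
      (1 / 2) * Real.log (1 + (1 + P * (1 + (P ^ ((α - 1) / 2)) ^ 2))) +
      (1 / 2) * Real.log (1 + P * P ^ (β - 1))
      = (1 / 2) * (Real.log (1 + (1 / (P ^ ((α - 1) / 2)) ^ 2 +
          (1 / P ^ ((α - 1) / 2) - 1) ^ 2)) +
        Real.log (1 + (1 + P * (1 + (P ^ ((α - 1) / 2)) ^ 2))) +
        Real.log (1 + P * P ^ (β - 1))) from by ring,
    mul_div_mul_left _ _ hhalf, add_div, add_div]
end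

section
/- For nonnegative reals P_cnF⁽¹⁾, P_cnF⁽²⁾ and h_s ≠ 0, the successive decoding rate constraints R⁽¹⁾ ≤ C⁺(P_cnF⁽¹⁾h_s²/(2P_cnF⁽²⁾h_s² + 1) − 1/2) and R⁽²⁾ ≤ C⁺(P_cnF⁽²⁾h_s² − 1/2) imply R⁽¹⁾ + R⁽²⁾ ≤ (1/2)log(1 + 2h_s²(P_cnF⁽¹⁾ + P_cnF⁽²⁾)), where C⁺(x) = max(0, (1/2)log(1+x)). -/
/-- The two successive-decoding constraints at the relay imply the
multiple-access-type sum-rate bound. -/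
theorem successive_decoding_sum_bound (R1 R2 P1 P2 hs : ℝ)
    (hR1 : 0 ≤ R1) (hR2 : 0 ≤ R2) (hP1 : 0 ≤ P1) (hP2 : 0 ≤ P2) (hhs : hs ≠ 0)
    (h1 : R1 ≤ max 0 ((1 / 2) * Real.log (1 + (P1 * hs ^ 2 / (2 * P2 * hs ^ 2 + 1) - 1 / 2))))
    (h2 : R2 ≤ max 0 ((1 / 2) * Real.log (1 + (P2 * hs ^ 2 - 1 / 2)))) :
    R1 + R2 ≤ (1 / 2) * Real.log (1 + 2 * hs ^ 2 * (P1 + P2)) := by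
  have hs2 : (0:ℝ) < hs ^ 2 := by positivity
  set a := P1 * hs ^ 2 with ha
  set b := P2 * hs ^ 2 with hb
  have hA : 0 ≤ a := by positivity
  have hB : 0 ≤ b := by positivity
  have hden : (0:ℝ) < 2 * b + 1 := by linarith
  have e1 : 1 + (P1 * hs ^ 2 / (2 * P2 * hs ^ 2 + 1) - 1 / 2)
      = (1 + 2 * a + 2 * b) / (2 * (2 * b + 1)) := by
    have : 2 * P2 * hs ^ 2 + 1 = 2 * b + 1 := by rw [hb]; ring
    rw [this]
    field_simp
    ring
  have e2 : 1 + (P2 * hs ^ 2 - 1 / 2) = (2 * b + 1) / 2 := by rw [hb]; ring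
  have eT : 1 + 2 * hs ^ 2 * (P1 + P2) = 1 + 2 * a + 2 * b := by rw [ha, hb]; ring
  rw [e1] at h1
  rw [e2] at h2
  rw [eT]
  have hnum : (0:ℝ) < 1 + 2 * a + 2 * b := by linarith
  have hT0 : 0 ≤ (1/2 : ℝ) * Real.log (1 + 2 * a + 2 * b) := by
    have := Real.log_nonneg (by linarith : (1:ℝ) ≤ 1 + 2 * a + 2 * b)
    linarith
  have hApos : (0:ℝ) < (1 + 2 * a + 2 * b) / (2 * (2 * b + 1)) := by positivity
  have hBpos : (0:ℝ) < (2 * b + 1) / 2 := by positivity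
  have hAle : (1/2 : ℝ) * Real.log ((1 + 2 * a + 2 * b) / (2 * (2 * b + 1)))
      ≤ (1/2 : ℝ) * Real.log (1 + 2 * a + 2 * b) := by
    have hle : (1 + 2 * a + 2 * b) / (2 * (2 * b + 1)) ≤ 1 + 2 * a + 2 * b := by
      rw [div_le_iff₀ (by linarith : (0:ℝ) < 2 * (2 * b + 1))]; nlinarith
    have h := Real.log_le_log hApos hle
    linarith
  have hBle : (1/2 : ℝ) * Real.log ((2 * b + 1) / 2)
      ≤ (1/2 : ℝ) * Real.log (1 + 2 * a + 2 * b) := by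
    have hle : (2 * b + 1) / 2 ≤ 1 + 2 * a + 2 * b := by
      rw [div_le_iff₀ (by norm_num : (0:ℝ) < 2)]; nlinarith
    have h := Real.log_le_log hBpos hle
    linarith
  rcases le_or_gt ((1/2 : ℝ) * Real.log ((1 + 2 * a + 2 * b) / (2 * (2 * b + 1)))) 0 with hc1 | hc1
  · rw [max_eq_left hc1] at h1
    rcases le_or_gt ((1/2 : ℝ) * Real.log ((2 * b + 1) / 2)) 0 with hc2 | hc2
    · rw [max_eq_left hc2] at h2
      linarith
    · rw [max_eq_right hc2.le] at h2
      linarith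
  · rw [max_eq_right hc1.le] at h1
    rcases le_or_gt ((1/2 : ℝ) * Real.log ((2 * b + 1) / 2)) 0 with hc2 | hc2
    · rw [max_eq_left hc2] at h2
      linarith
    · rw [max_eq_right hc2.le] at h2
      -- sum of the two logs equals log(num) - 2 log 2
      have hlog2 : (0:ℝ) ≤ Real.log 2 := Real.log_nonneg (by norm_num)
      have eA : Real.log ((1 + 2 * a + 2 * b) / (2 * (2 * b + 1)))
          = Real.log (1 + 2 * a + 2 * b) - (Real.log 2 + Real.log (2 * b + 1)) := by
        rw [Real.log_div hnum.ne' (by positivity),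
            Real.log_mul (by norm_num) hden.ne']
      have eB : Real.log ((2 * b + 1) / 2)
          = Real.log (2 * b + 1) - Real.log 2 := by
        rw [Real.log_div hden.ne' (by norm_num)]
      rw [eA] at h1
      rw [eB] at h2
      linarith
end
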